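/- arXiv:math/0702452 — 2 statements merged into one kernel-verified Lean document; each statement's English description precedes it below -/
import Mathlib

section
/- Let c_i(n,k) be the number of signed permutations π ∈ B_n with exc_A(π) = k and neg(π) = i. Then c_i(n,0) = Σ_{1 ≤ t_1 < t_2 < ⋯ < t_i ≤ n} i! · (i+1)^{n−t_i} · Π_{u=1}^{i} u^{t_u − t_{u−1} − 1}, where t_0 = 0. -/
open Finset Polynomial

/-- The group of colored permutations `G_{r,n} = Z_r ≀ S_n`, realized as bijections of the
colored alphabet `Σ = [n] × {0,…,r-1}` commuting with the color shift. -/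
def ColoredPerm (r n : ℕ) [NeZero r] : Type :=
  {π : Equiv.Perm (Fin n × Fin r) //
    ∀ x : Fin n × Fin r, π (x.1, x.2 + 1) = ((π x).1, (π x).2 + 1)}

/-- The color order on the colored alphabet:
`1^[r-1] < ⋯ < n^[r-1] < ⋯ < 1^[0] < ⋯ < n^[0]` (higher color is smaller). -/
def colorLt {r n : ℕ} (x y : Fin n × Fin r) : Prop :=
  y.2 < x.2 ∨ (x.2 = y.2 ∧ x.1 < y.1)

/-- The excedance number `exc` of a colored permutation. -/
noncomputable def cExc {r n : ℕ} [NeZero r] (π : ColoredPerm r n) : ℕ :=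
  Nat.card {x : Fin n × Fin r // colorLt x (π.1 x)}

/-- `exc_A(π) = |{i ∈ [n-1] : π(i) > i}|` (positions are the color-0 letters,
and `i ∈ [n-1]` corresponds to `i.val + 1 < n`). -/
noncomputable def cExcA {r n : ℕ} [NeZero r] (π : ColoredPerm r n) : ℕ :=
  Nat.card {i : Fin n // i.val + 1 < n ∧ colorLt (i, 0) (π.1 (i, 0))}

/-- `csum(π)`: the sum of the colors appearing in the window notation of `π`. -/
def csum {r n : ℕ} [NeZero r] (π : ColoredPerm r n) : ℕ :=
  ∑ i : Fin n, (π.1 (i, 0)).2.val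

/-- `c_i(n,k)`: the number of signed permutations `π ∈ B_n` with `exc_A(π) = k` and
`neg(π) = i`. -/
noncomputable def cB (n i k : ℕ) : ℕ :=
  Nat.card {π : ColoredPerm 2 n // cExcA π = k ∧ csum π = i}

/-- Given a subset `s = {t_1 < t_2 < ⋯ < t_i} ⊆ {1,…,n}`, `tEnum s u = t_u`
(with `tEnum s 0 = t_0 = 0`). -/
def tEnum (s : Finset ℕ) (u : ℕ) : ℕ :=
  if u = 0 then 0 else (s.sort (· ≤ ·)).getD (u - 1) 0

/-!
A signed permutation is a pair `(σ, P)` of its absolute value `σ ∈ S_n` and its set `P` of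
negative positions, and `exc_A = 0` says exactly that `σ j ≤ j` at every positive position `j`
(the last position is never an excedance). For `τ = σ⁻¹` this reads `τ v ∉ P → v ≤ τ v`, so
`τ` sends the last letter either to itself or into `P`, and removing it leaves the same condition
one size down. Hence there are `∏_j (#{k ∈ P | k < j} + 1)` such `σ`. Writing the shifted set
`P + 1` as `t_1 < ⋯ < t_i`, the factor at `j` is `u` for `t_{u-1} < j + 1 ≤ t_u` and `i + 1`
beyond `t_i`, which regroups into `i! · (i+1)^(n - t_i) · ∏_u u^(t_u - t_{u-1} - 1)`.
-/

open Fin.NatCast in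
lemma apply_eq_of_apply_add_one {α β : Type*} {r : ℕ} [NeZero r] {f : α × Fin r → β × Fin r}
    (hf : ∀ x, f (x.1, x.2 + 1) = ((f x).1, (f x).2 + 1)) (a : α) (c : Fin r) :
    f (a, c) = ((f (a, 0)).1, (f (a, 0)).2 + c) := by
  rw [← Fin.cast_val_eq_self c]
  induction c.val with
  | zero => simp
  | succ k ih => simpa [← add_assoc, ih] using hf (a, (k : Fin r))

namespace ColoredPerm

variable {r n : ℕ} [NeZero r]

lemma apply_eq (π : ColoredPerm r n) (j : Fin n) (c : Fin r) :
    π.1 (j, c) = ((π.1 (j, 0)).1, (π.1 (j, 0)).2 + c) :=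
  apply_eq_of_apply_add_one π.2 j c

lemma injective_fst_apply_zero (π : ColoredPerm r n) :
    Function.Injective fun j => (π.1 (j, 0)).1 := by
  intro j k h
  have : π.1 (k, (π.1 (j, 0)).2 - (π.1 (k, 0)).2) = π.1 (j, 0) := by
    rw [apply_eq]; exact Prod.ext h.symm (by simp)
  exact congrArg Prod.fst (π.1.injective this).symm

noncomputable def ofWindow : Equiv.Perm (Fin n) × (Fin n → Fin r) ≃ ColoredPerm r n where
  toFun p := ⟨{ toFun := fun x => (p.1 x.1, p.2 x.1 + x.2)
                invFun := fun y => (p.1.symm y.1, y.2 - p.2 (p.1.symm y.1))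
                left_inv := fun x => by simp
                right_inv := fun y => by simp },
              fun x => by simp [add_assoc]⟩
  invFun π := (Equiv.ofBijective _ (Finite.injective_iff_bijective.1 π.injective_fst_apply_zero),
    fun j => (π.1 (j, 0)).2)
  left_inv p := by ext <;> simp
  right_inv π := Subtype.ext <| Equiv.ext fun x => (apply_eq π x.1 x.2).symm

lemma ofWindow_apply_zero (p : Equiv.Perm (Fin n) × (Fin n → Fin r)) (j : Fin n) :
    (ofWindow p).1 (j, 0) = (p.1 j, p.2 j) :=
  Prod.ext rfl (add_zero _)

end ColoredPerm

lemma colorLt_zero_left_iff {r n : ℕ} [NeZero r] (i : Fin n) (y : Fin n × Fin r) :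
    colorLt (i, 0) y ↔ y.2 = 0 ∧ i < y.1 := by
  simp [colorLt, eq_comm]

lemma cExcA_ofWindow_eq_zero_iff {r n : ℕ} [NeZero r]
    (p : Equiv.Perm (Fin n) × (Fin n → Fin r)) :
    cExcA (ColoredPerm.ofWindow p) = 0 ↔ ∀ j, p.2 j = 0 → p.1 j ≤ j := by
  rw [cExcA, Finite.card_eq_zero_iff, isEmpty_subtype]
  simp only [ColoredPerm.ofWindow_apply_zero, colorLt_zero_left_iff, not_and, not_lt]
  refine forall_congr' fun j => ⟨fun h hj => ?_, fun h _ hj => h hj⟩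
  by_cases hn : j.val + 1 < n
  · exact h hn hj
  · exact Fin.le_def.2 (by omega)

lemma csum_ofWindow {r n : ℕ} [NeZero r] (p : Equiv.Perm (Fin n) × (Fin n → Fin r)) :
    csum (ColoredPerm.ofWindow p) = ∑ j, (p.2 j).val := by
  simp [csum, ColoredPerm.ofWindow_apply_zero]

def finsetEquivFinTwo (α : Type*) [Fintype α] [DecidableEq α] : Finset α ≃ (α → Fin 2) where
  toFun s a := if a ∈ s then 1 else 0
  invFun ε := {a | ε a = 1}
  left_inv s := by ext a; by_cases a ∈ s <;> simp [*]
  right_inv ε := by ext a; rcases Fin.exists_fin_two.1 ⟨ε a, rfl⟩ with h | h <;> simp [h]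

lemma finsetEquivFinTwo_apply_eq_zero_iff {α : Type*} [Fintype α] [DecidableEq α]
    (s : Finset α) (a : α) : finsetEquivFinTwo α s a = 0 ↔ a ∉ s := by
  by_cases a ∈ s <;> simp [finsetEquivFinTwo, *]

lemma sum_val_finsetEquivFinTwo {α : Type*} [Fintype α] [DecidableEq α] (s : Finset α) :
    ∑ a, (finsetEquivFinTwo α s a).val = #s := by
  simp [finsetEquivFinTwo, apply_ite Fin.val]

lemma card_filter_and_snd_mem {α β : Type*} [Fintype α] [Fintype β] [DecidableEq β]
    (R : α → β → Prop) [∀ a b, Decidable (R a b)] (s : Finset β) :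
    #{p : α × β | R p.1 p.2 ∧ p.2 ∈ s} = ∑ b ∈ s, #{a | R a b} := by
  rw [card_filter, Fintype.sum_prod_type_right, ← sum_subset (subset_univ s)]
  · exact sum_congr rfl fun b hb => by rw [card_filter]; simp [hb]
  · intro b _ hb
    simp [hb]

lemma cB_zero_eq_sum (n i : ℕ) :
    cB n i 0 = ∑ P ∈ powersetCard i univ, #{σ : Equiv.Perm (Fin n) | ∀ j ∉ P, σ j ≤ j} := by
  let e := (Equiv.prodCongr (Equiv.refl _) (finsetEquivFinTwo (Fin n))).trans
    (ColoredPerm.ofWindow (r := 2))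
  have he : ∀ p, ((∀ j ∉ p.2, p.1 j ≤ j) ∧ p.2 ∈ powersetCard i univ) ↔
      (cExcA (e p) = 0 ∧ csum (e p) = i) := fun p => by
    simp [e, cExcA_ofWindow_eq_zero_iff, csum_ofWindow, finsetEquivFinTwo_apply_eq_zero_iff,
      sum_val_finsetEquivFinTwo]
  rw [cB, ← Nat.card_congr (e.subtypeEquiv he), Nat.card_eq_fintype_card, Fintype.card_subtype]
  exact card_filter_and_snd_mem (fun (σ : Equiv.Perm (Fin n)) P => ∀ j ∉ P, σ j ≤ j) _

namespace Equiv.Perm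

def decomposeLast (n : ℕ) : Perm (Fin (n + 1)) ≃ Fin (n + 1) × Perm (Fin n) :=
  ((permCongr (finSuccEquiv' (Fin.last n))).trans decomposeOption).trans
    (prodCongr (finSuccEquiv' (Fin.last n)).symm (Equiv.refl _))

@[simp]
lemma decomposeLast_symm_apply_last {n : ℕ} (a : Fin (n + 1)) (e : Perm (Fin n)) :
    (decomposeLast n).symm (a, e) (Fin.last n) = a := by
  simp [decomposeLast]

@[simp]
lemma decomposeLast_symm_apply_castSucc {n : ℕ} (a : Fin (n + 1)) (e : Perm (Fin n))
    (x : Fin n) :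
    (decomposeLast n).symm (a, e) x.castSucc = swap (Fin.last n) a (e x).castSucc := by
  simp only [decomposeLast, symm_trans, prodCongr_symm, symm_symm, refl_symm, permCongr_symm,
    trans_apply, prodCongr_apply, coe_refl, Prod.map_apply, id_eq, decomposeOption_symm_apply,
    permCongr_mul, coe_mul, Function.comp_apply, permCongr_apply,
    finSuccEquiv'_last_apply_castSucc, optionCongr_apply, Option.map_some]
  rw [← finSuccEquiv'_last_apply_castSucc (e x), ← finSuccEquiv'_at (Fin.last n),
    (finSuccEquiv' (Fin.last n)).injective.swap_apply]
  simp

lemma decomposeLast_symm_le_apply_iff {n : ℕ} (P : Finset (Fin (n + 1))) (a : Fin (n + 1))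
    (e : Perm (Fin n)) :
    (∀ v, (decomposeLast n).symm (a, e) v ∉ P → v ≤ (decomposeLast n).symm (a, e) v) ↔
      a ∈ insert (Fin.last n) P ∧ ∀ x, (e x).castSucc ∉ P → x ≤ e x := by
  have hlast : (a ∉ P → Fin.last n ≤ a) ↔ a ∈ insert (Fin.last n) P := by
    rw [Fin.last_le_iff, mem_insert]; tauto
  rw [Fin.forall_fin_succ', and_comm, decomposeLast_symm_apply_last, hlast]
  refine and_congr_right fun ha => forall_congr' fun x => ?_
  rw [decomposeLast_symm_apply_castSucc]
  rcases eq_or_ne (e x).castSucc a with hxa | hxa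
  · have haP : a ∈ P := (mem_insert.1 ha).resolve_left (hxa ▸ Fin.castSucc_ne_last _)
    rw [hxa, swap_apply_right]
    exact iff_of_true (fun _ => Fin.le_last _) (absurd haP)
  · rw [swap_apply_of_ne_of_ne (Fin.castSucc_ne_last _) hxa, Fin.castSucc_le_castSucc_iff]

lemma card_le_apply_of_apply_notMem {n : ℕ} (P : Finset (Fin n)) :
    #{τ : Perm (Fin n) | ∀ v, τ v ∉ P → v ≤ τ v} = ∏ j, (#{k ∈ P | k < j} + 1) := by
  induction n with
  | zero => simp
  | succ n ih =>
    set P' : Finset (Fin n) := {x | x.castSucc ∈ P}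
    have hcard : #{τ : Perm (Fin (n + 1)) | ∀ v, τ v ∉ P → v ≤ τ v} =
        #(insert (Fin.last n) P) * #{e : Perm (Fin n) | ∀ x, e x ∉ P' → x ≤ e x} := by
      rw [← card_product]
      refine (card_equiv (decomposeLast n).symm fun p => ?_).symm
      simp [decomposeLast_symm_le_apply_iff, P']
    have hlast : #(insert (Fin.last n) P) = #{k ∈ P | k < Fin.last n} + 1 := by
      rw [← card_insert_of_notMem (a := Fin.last n) (s := {k ∈ P | k < Fin.last n}) (by simp)]
      congr 1; ext k; simp [Fin.lt_last_iff_ne_last]; tauto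
    have hcastSucc : ∀ x : Fin n, #{k ∈ P' | k < x} = #{k ∈ P | k < x.castSucc} := by
      intro x
      rw [← card_map Fin.castSuccEmb]
      congr 1; ext k
      simp only [mem_map, mem_filter, Fin.coe_castSuccEmb, P', mem_univ, true_and]
      constructor
      · rintro ⟨k, ⟨hk, hlt⟩, rfl⟩
        exact ⟨hk, Fin.castSucc_lt_castSucc_iff.2 hlt⟩
      · rintro ⟨hk, hlt⟩
        obtain ⟨k, rfl⟩ := Fin.exists_castSucc_eq.2 (Fin.ne_last_of_lt hlt)
        exact ⟨k, ⟨hk, Fin.castSucc_lt_castSucc_iff.1 hlt⟩, rfl⟩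
    rw [hcard, ih, Fin.prod_univ_castSucc, hlast, mul_comm]
    simp only [hcastSucc]

lemma card_apply_le_of_notMem {n : ℕ} (P : Finset (Fin n)) :
    #{σ : Perm (Fin n) | ∀ j ∉ P, σ j ≤ j} = ∏ j, (#{k ∈ P | k < j} + 1) := by
  rw [← card_le_apply_of_apply_notMem]
  refine card_equiv (Equiv.inv _) fun σ => ?_
  simp only [mem_filter, mem_univ, true_and]
  exact ⟨fun h v hv => by simpa using h _ hv, fun h j hj => by simpa using h (σ j) (by simpa)⟩

end Equiv.Perm

lemma Finset.sort_insert_of_forall_lt {α : Type*} [LinearOrder α] (s : Finset α) {a : α}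
    (h : ∀ x ∈ s, x < a) : (insert a s).sort (· ≤ ·) = s.sort (· ≤ ·) ++ [a] := by
  have hnodup : (s.sort (· ≤ ·) ++ [a]).Nodup :=
    List.nodup_append.2 ⟨sort_nodup _ _, List.nodup_singleton a,
      fun x hx y hy => (h x ((mem_sort _).1 hx)).ne.trans_eq (List.mem_singleton.1 hy).symm⟩
  have hsorted : (s.sort (· ≤ ·) ++ [a]).Pairwise (· ≤ ·) :=
    List.pairwise_append.2 ⟨pairwise_sort _ _, List.pairwise_singleton _ a,
      fun x hx y hy => (h x ((mem_sort _).1 hx)).le.trans_eq (List.mem_singleton.1 hy).symm⟩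
  rw [← (List.toFinset_sort _ hnodup).2 hsorted, List.toFinset_append]
  simp

lemma tEnum_insert_of_le {s : Finset ℕ} {a u : ℕ} (h : ∀ x ∈ s, x < a) (hu : u ≤ #s) :
    tEnum (insert a s) u = tEnum s u := by
  unfold tEnum
  split_ifs
  · rfl
  · rw [sort_insert_of_forall_lt s h, List.getD_append _ _ _ _ (by rw [length_sort]; omega)]

lemma tEnum_insert_card_add_one {s : Finset ℕ} {a : ℕ} (h : ∀ x ∈ s, x < a) :
    tEnum (insert a s) (#s + 1) = a := by
  simp [tEnum, sort_insert_of_forall_lt s h]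

lemma tEnum_mem {s : Finset ℕ} {u : ℕ} (h1 : 1 ≤ u) (h2 : u ≤ #s) : tEnum s u ∈ s := by
  rw [tEnum, if_neg (by omega), List.getD_eq_getElem _ _ (by rw [length_sort]; omega)]
  exact (mem_sort _).1 (List.getElem_mem _)

lemma tEnum_card_lt {s : Finset ℕ} {a : ℕ} (h : ∀ x ∈ s, x < a) (ha : 0 < a) :
    tEnum s #s < a := by
  rcases Nat.eq_zero_or_pos #s with hs | hs
  · simpa [hs, tEnum] using ha
  · exact h _ (tEnum_mem hs le_rfl)

lemma prod_Icc_card_filter_lt_add_one {n : ℕ} {s : Finset ℕ} (hs : s ⊆ Icc 1 n) :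
    ∏ m ∈ Icc 1 n, (#{t ∈ s | t < m} + 1) =
      (#s).factorial * (#s + 1) ^ (n - tEnum s #s) *
        ∏ u ∈ Icc 1 #s, u ^ (tEnum s u - tEnum s (u - 1) - 1) := by
  induction s using Finset.induction_on_max generalizing n with
  | empty => simp [tEnum]
  | insert a s hlt ih =>
    have ha : a ∈ Icc 1 n := hs (mem_insert_self a s)
    rw [mem_Icc] at ha
    have has : a ∉ s := fun h => (hlt a h).false
    have hsub : s ⊆ Icc 1 a := fun x hx => by
      have := mem_Icc.1 (hs (mem_insert_of_mem hx)); have := hlt x hx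
      rw [mem_Icc]; omega
    have hbelow : ∏ m ∈ Icc 1 a, (#{t ∈ insert a s | t < m} + 1) =
        ∏ m ∈ Icc 1 a, (#{t ∈ s | t < m} + 1) :=
      prod_congr rfl fun m hm => by
        rw [filter_insert, if_neg (by rw [mem_Icc] at hm; omega)]
    have habove : ∏ m ∈ Ioc a n, (#{t ∈ insert a s | t < m} + 1) = (#s + 2) ^ (n - a) := by
      rw [prod_congr rfl fun m hm => ?_, prod_const, Nat.card_Ioc]
      rw [filter_true_of_mem fun t ht => ?_, card_insert_of_notMem has]
      rw [mem_Ioc] at hm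
      rcases mem_insert.1 ht with rfl | ht
      · exact hm.1
      · exact (hlt t ht).trans hm.1
    have hlow : ∀ u ∈ Icc 1 #s, u ^ (tEnum (insert a s) u - tEnum (insert a s) (u - 1) - 1) =
        u ^ (tEnum s u - tEnum s (u - 1) - 1) := fun u hu => by
      rw [mem_Icc] at hu
      rw [tEnum_insert_of_le hlt hu.2, tEnum_insert_of_le hlt (by omega)]
    have hIcc : ∀ b, Icc 1 b = Ioc 0 b := fun b => Icc_add_one_left_eq_Ioc 0 b
    rw [hIcc, ← prod_Ioc_consecutive _ (Nat.zero_le a) ha.2, ← hIcc, hbelow, habove, ih hsub,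
      card_insert_of_notMem has, prod_Icc_succ_top (by omega : 1 ≤ #s + 1), prod_congr rfl hlow,
      tEnum_insert_card_add_one hlt, Nat.add_sub_cancel, tEnum_insert_of_le hlt le_rfl,
      Nat.factorial_succ]
    obtain ⟨d, hd⟩ : ∃ d, a - tEnum s #s = d + 1 :=
      ⟨_, (Nat.succ_pred_eq_of_pos (Nat.sub_pos_of_lt (tEnum_card_lt hlt (by omega)))).symm⟩
    rw [hd, Nat.add_sub_cancel, pow_succ]
    ring

def Fin.valSuccEmb (n : ℕ) : Fin n ↪ ℕ := Fin.valEmbedding.trans (addRightEmbedding 1)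

lemma Fin.map_univ_valSuccEmb (n : ℕ) :
    (univ : Finset (Fin n)).map (Fin.valSuccEmb n) = Icc 1 n := by
  ext m
  simp only [mem_map, mem_univ, true_and, mem_Icc, Fin.valSuccEmb, Function.Embedding.trans_apply,
    Fin.valEmbedding_apply, addRightEmbedding_apply]
  exact ⟨by rintro ⟨j, rfl⟩; omega, fun h => ⟨⟨m - 1, by omega⟩, by simp; omega⟩⟩

lemma prod_card_filter_lt_map_valSuccEmb {n : ℕ} (P : Finset (Fin n)) :
    ∏ j, (#{k ∈ P | k < j} + 1) =
      ∏ m ∈ Icc 1 n, (#{t ∈ P.map (Fin.valSuccEmb n) | t < m} + 1) := by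
  rw [← Fin.map_univ_valSuccEmb, prod_map]
  refine prod_congr rfl fun j _ => ?_
  rw [filter_map, card_map]
  congr 3
  ext k
  simp [Fin.valSuccEmb]

/-- The initial condition:
`c_i(n,0) = Σ_{1 ≤ t_1 < ⋯ < t_i ≤ n} i!·(i+1)^{n−t_i}·Π_{u=1}^{i} u^{t_u−t_{u−1}−1}`,
where `t_0 = 0`. -/
theorem cB_initial (n i : ℕ) :
    cB n i 0 =
      ∑ s ∈ (Finset.Icc 1 n).powersetCard i,
        i.factorial * (i + 1) ^ (n - tEnum s i) *
          ∏ u ∈ Finset.Icc 1 i, u ^ (tEnum s u - tEnum s (u - 1) - 1) := by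
  rw [cB_zero_eq_sum, ← Fin.map_univ_valSuccEmb, powersetCard_map, sum_map]
  simp only [RelEmbedding.coe_toEmbedding, mapEmbedding_apply]
  refine sum_congr rfl fun P hP => ?_
  have hsub : P.map (Fin.valSuccEmb n) ⊆ Icc 1 n :=
    Fin.map_univ_valSuccEmb n ▸ map_subset_map.2 (subset_univ P)
  have hcard : #(P.map (Fin.valSuccEmb n)) = i := by rw [card_map, (mem_powersetCard.1 hP).2]
  rw [Equiv.Perm.card_apply_le_of_notMem, prod_card_filter_lt_map_valSuccEmb,
    prod_Icc_card_filter_lt_add_one hsub, hcard]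
end

section
/- For all n ≥ 1, the generating polynomial of exc_A over G_{r,n} satisfies D_{r,n}(t) = r · Σ_{j=1}^{n} j! · S(n,j) · (t+r−1)^{j−1} · (1−t)^{n−j}, where S(n,j) are the Stirling numbers of the second kind. -/
open Finset Polynomial

/-- `d(r,n,k)`: the number of colored permutations `π ∈ G_{r,n}` with `exc_A(π) = k`. -/
noncomputable def dG (r n : ℕ) [NeZero r] (k : ℕ) : ℕ :=
  Nat.card {π : ColoredPerm r n // cExcA π = k}

/-- The generating polynomial `D_{r,n}(t) = Σ_{k=0}^{n} d(r,n,k) t^k` of `exc_A` over `G_{r,n}`. -/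
noncomputable def Dpoly (r n : ℕ) [NeZero r] : Polynomial ℚ :=
  ∑ k ∈ Finset.range (n + 1), Polynomial.C ((dG r n k : ℚ)) * Polynomial.X ^ k

/-- The Stirling numbers of the second kind, via `S(n+1,j) = j·S(n,j) + S(n,j−1)`. -/
def stirling2 : ℕ → ℕ → ℕ
  | 0, 0 => 1
  | 0, _ + 1 => 0
  | _ + 1, 0 => 0
  | n + 1, j + 1 => (j + 1) * stirling2 n (j + 1) + stirling2 n j

/-!
A colored permutation is a pair `(σ, c)` of a permutation and a coloring, and `i` is an
`exc_A`-excedance exactly when `i < σ i` and `c i = 0`. Summing over the colorings gives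
`D_{r,n}(t) = Σ_σ (t + r - 1)^{exc σ} r^{n - exc σ}`, the Eulerian polynomial
`A_n(x) = Σ_σ x^{exc σ}` homogenized at `x = (t + r - 1)/r`. The closed form is then Frobenius'
formula `A_n(x) = Σ_j j! S(n,j) x^{j-1} (1-x)^{n-j}`: both sides satisfy
`A_{n+1} = (1 + n x) A_n + x (1 - x) A_n'`, the left one by splitting a permutation of `[n+1]`
according to the image of its first letter, the right one by the recurrence of `S(n,j)`.
-/

open Nat Equiv

theorem stirling2_eq_stirlingSecond : stirling2 = stirlingSecond := by
  funext n j
  induction n generalizing j with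
  | zero => cases j <;> rfl
  | succ n ih => cases j <;> simp [stirling2, stirlingSecond, ih]

def excCount {n : ℕ} (σ : Perm (Fin n)) : ℕ := #{i | i < σ i}

theorem excCount_le {n : ℕ} (σ : Perm (Fin n)) : excCount σ ≤ n :=
  (card_filter_le _ _).trans_eq (card_fin n)

theorem card_filter_not_lt_apply {n : ℕ} (σ : Perm (Fin n)) :
    #{i | ¬i < σ i} = n - excCount σ := by
  have h := card_filter_add_card_filter_not (s := univ) fun i : Fin n => i < σ i
  rw [Finset.card_univ, Fintype.card_fin] at h
  rw [excCount]
  omega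

theorem excCount_decomposeFin_symm_zero {n : ℕ} (σ : Perm (Fin n)) :
    excCount (Perm.decomposeFin.symm (0, σ)) = excCount σ := by
  simp [excCount, Fin.card_filter_univ_succ', Fin.succ_lt_succ_iff]

/-- The swap in `decomposeFin` sends the image of `x` to `0`, so `x` loses its excedance, while the
new first letter gains one. -/
theorem excCount_decomposeFin_symm_succ_apply {n : ℕ} (σ : Perm (Fin n)) (x : Fin n) :
    excCount (Perm.decomposeFin.symm ((σ x).succ, σ)) =
      if x < σ x then excCount σ else excCount σ + 1 := by
  have hsucc (y : Fin n) : y.succ < Perm.decomposeFin.symm ((σ x).succ, σ) y.succ ↔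
      y ∈ ({i | i < σ i} : Finset (Fin n)).erase x := by
    rw [Perm.decomposeFin_symm_apply_succ, mem_erase, mem_filter_univ]
    by_cases hy : y = x
    · simp [hy]
    · rw [swap_apply_of_ne_of_ne (Fin.succ_ne_zero _) (by simpa using σ.injective.ne hy)]
      simp [hy, Fin.succ_lt_succ_iff]
  rw [excCount, Fin.card_filter_univ_succ', Perm.decomposeFin_symm_apply_zero,
    if_pos (Fin.succ_pos _), filter_congr (fun y _ => hsucc y), filter_mem_eq_inter, univ_inter,
    card_erase_eq_ite]
  simp only [mem_filter_univ]
  split_ifs with h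
  · have : 0 < excCount σ := Finset.card_pos.mpr ⟨x, by simpa using h⟩
    rw [excCount] at this ⊢
    omega
  · rw [excCount, add_comm]

variable (R : Type*) [CommRing R]

noncomputable def eulerianPoly (n : ℕ) : R[X] := ∑ σ : Perm (Fin n), X ^ excCount σ

noncomputable def eulerianStep (n : ℕ) : R[X] →ₗ[R] R[X] :=
  LinearMap.mulLeft R (1 + (n : R[X]) * X) + LinearMap.mulLeft R (X * (1 - X)) ∘ₗ derivative

variable {R}

theorem eulerianStep_apply (n : ℕ) (p : R[X]) :
    eulerianStep R n p = (1 + (n : R[X]) * X) * p + X * (1 - X) * derivative p := rfl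

theorem mul_derivative_pow (p : R[X]) (k : ℕ) :
    p * derivative (p ^ k) = (k : R[X]) * p ^ k * derivative p := by
  cases k with
  | zero => simp
  | succ k => rw [derivative_pow_succ, ← C_eq_natCast]; push_cast; ring

theorem eulerianStep_X_pow (n e : ℕ) :
    eulerianStep R n (X ^ e) =
      ((e : R[X]) + 1) * X ^ e + ((n : R[X]) - (e : R[X])) * X ^ (e + 1) := by
  have h := mul_derivative_pow (X : R[X]) e
  rw [derivative_X, mul_one] at h
  rw [eulerianStep_apply]
  linear_combination (1 - X) * h

theorem sum_ite_lt_pow {n : ℕ} (σ : Perm (Fin n)) (p : R[X]) :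
    ∑ x, (if x < σ x then p ^ excCount σ else p ^ (excCount σ + 1)) =
      (excCount σ : R[X]) * p ^ excCount σ +
        ((n : R[X]) - (excCount σ : R[X])) * p ^ (excCount σ + 1) := by
  rw [sum_ite, sum_const, sum_const, nsmul_eq_mul, nsmul_eq_mul, card_filter_not_lt_apply,
    Nat.cast_sub (excCount_le σ)]
  rfl

theorem eulerianPoly_succ (n : ℕ) :
    eulerianPoly R (n + 1) = eulerianStep R n (eulerianPoly R n) := by
  rw [eulerianPoly, eulerianPoly, map_sum,
    ← (Perm.decomposeFin (n := n)).symm.sum_comp, Fintype.sum_prod_type_right]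
  refine sum_congr rfl fun σ _ => ?_
  rw [Fin.sum_univ_succ, ← Equiv.sum_comp σ, excCount_decomposeFin_symm_zero, eulerianStep_X_pow]
  simp only [excCount_decomposeFin_symm_succ_apply, apply_ite (X ^ ·), sum_ite_lt_pow]
  ring

variable (R) in
/-- Frobenius' expression for `A_{m+1}`, indexed by `(j - 1, m + 1 - j)`. -/
noncomputable def frobeniusPoly (m : ℕ) : R[X] :=
  ∑ p ∈ antidiagonal m,
    ((p.1 + 1)! * stirlingSecond (m + 1) (p.1 + 1)) • (X ^ p.1 * (1 - X) ^ p.2)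

theorem eulerianStep_X_pow_mul_one_sub_X_pow (a d : ℕ) :
    eulerianStep R (a + d + 1) (X ^ a * (1 - X) ^ d) =
      (a + 1) • (X ^ a * (1 - X) ^ (d + 1)) + (a + 2) • (X ^ (a + 1) * (1 - X) ^ d) := by
  have hX := mul_derivative_pow (X : R[X]) a
  have hY := mul_derivative_pow (1 - X : R[X]) d
  simp only [derivative_X, derivative_sub, derivative_one, zero_sub, mul_one] at hX hY
  rw [eulerianStep_apply, derivative_mul]
  simp only [nsmul_eq_mul]
  push_cast
  linear_combination (1 - X) ^ (d + 1) * hX + X ^ (a + 1) * hY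

theorem frobeniusPoly_succ (m : ℕ) :
    frobeniusPoly R (m + 1) = eulerianStep R (m + 1) (frobeniusPoly R m) := by
  have hstep : ∀ p ∈ antidiagonal m,
      eulerianStep R (m + 1)
        (((p.1 + 1)! * stirlingSecond (m + 1) (p.1 + 1)) • (X ^ p.1 * (1 - X) ^ p.2)) =
      ((p.1 + 1)! * ((p.1 + 1) * stirlingSecond (m + 1) (p.1 + 1))) •
          (X ^ p.1 * (1 - X) ^ (p.2 + 1)) +
        ((p.1 + 1 + 1)! * stirlingSecond (m + 1) (p.1 + 1)) •
          (X ^ (p.1 + 1) * (1 - X) ^ p.2) := by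
    rintro ⟨a, d⟩ hp
    rw [HasAntidiagonal.mem_antidiagonal] at hp
    rw [map_nsmul, ← hp, eulerianStep_X_pow_mul_one_sub_X_pow, smul_add, smul_smul, smul_smul,
      factorial_succ (a + 1)]
    congr 2 <;> ring
  have hsplit (p : ℕ × ℕ) :
      ((p.1 + 1)! * stirlingSecond (m + 1 + 1) (p.1 + 1)) • (X ^ p.1 * (1 - X : R[X]) ^ p.2) =
        ((p.1 + 1)! * ((p.1 + 1) * stirlingSecond (m + 1) (p.1 + 1))) •
            (X ^ p.1 * (1 - X) ^ p.2) +
          ((p.1 + 1)! * stirlingSecond (m + 1) p.1) • (X ^ p.1 * (1 - X) ^ p.2) := by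
    rw [stirlingSecond_succ_succ, mul_add, add_smul]
  rw [frobeniusPoly, frobeniusPoly, map_sum, sum_congr rfl hstep,
    sum_congr rfl fun p _ => hsplit p, sum_add_distrib, sum_add_distrib,
    Nat.sum_antidiagonal_succ', Nat.sum_antidiagonal_succ]
  simp [stirlingSecond_eq_zero_of_lt]

theorem eulerianPoly_succ_eq_frobeniusPoly (m : ℕ) :
    eulerianPoly R (m + 1) = frobeniusPoly R m := by
  induction m with
  | zero => simp [eulerianPoly, frobeniusPoly, excCount, stirlingSecond_self]
  | succ m ih => rw [eulerianPoly_succ, ih, frobeniusPoly_succ]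

theorem sum_Icc_one_eq_sum_antidiagonal {M : Type*} [AddCommMonoid M] (f : ℕ → ℕ → M)
    (m : ℕ) :
    ∑ j ∈ Icc 1 (m + 1), f j (m + 1 - j) = ∑ p ∈ antidiagonal m, f (p.1 + 1) p.2 := by
  rw [Nat.sum_antidiagonal_eq_sum_range_succ (fun a d => f (a + 1) d),
    ← Finset.Ico_add_one_right_eq_Icc, sum_Ico_eq_sum_range]
  refine sum_congr rfl fun k _ => ?_
  rw [add_comm 1 k, Nat.add_sub_add_right]

theorem sum_perm_pow_excCount_mul_pow {K : Type*} [Field K] (m : ℕ) (a b : K) (hb : b ≠ 0) :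
    ∑ σ : Perm (Fin (m + 1)), a ^ excCount σ * b ^ (m + 1 - excCount σ) =
      b * ∑ j ∈ Icc 1 (m + 1),
        ((j ! * stirlingSecond (m + 1) j : ℕ) : K) * a ^ (j - 1) * (b - a) ^ (m + 1 - j) := by
  have scale (x : K) (e : ℕ) : b ^ e * (x / b) ^ e = x ^ e := by
    rw [← mul_pow, mul_div_cancel₀ x hb]
  calc ∑ σ : Perm (Fin (m + 1)), a ^ excCount σ * b ^ (m + 1 - excCount σ)
      = b ^ (m + 1) * (eulerianPoly K (m + 1)).eval (a / b) := by
        rw [eulerianPoly, eval_finsetSum, mul_sum]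
        refine sum_congr rfl fun σ _ => ?_
        rw [eval_pow, eval_X, pow_sub₀ b hb (excCount_le σ), div_pow]
        ring
    _ = b ^ (m + 1) * (frobeniusPoly K m).eval (a / b) := by
        rw [eulerianPoly_succ_eq_frobeniusPoly]
    _ = _ := by
        rw [frobeniusPoly, eval_finsetSum, mul_sum, sum_Icc_one_eq_sum_antidiagonal
          (fun j d => ((j ! * stirlingSecond (m + 1) j : ℕ) : K) * a ^ (j - 1) * (b - a) ^ d),
          mul_sum]
        refine sum_congr rfl fun p hp => ?_
        rw [HasAntidiagonal.mem_antidiagonal] at hp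
        simp only [nsmul_eq_mul, eval_mul, eval_natCast, eval_pow, eval_X, eval_sub, eval_one,
          Nat.add_sub_cancel, ← hp]
        rw [← scale a p.1, ← scale (b - a) p.2, sub_div, div_self hb]
        ring

namespace ColoredPerm

variable {r n : ℕ} [NeZero r]

open Fin.NatCast in
theorem apply_mk (π : ColoredPerm r n) (i : Fin n) (c : Fin r) :
    π.1 (i, c) = ((π.1 (i, 0)).1, (π.1 (i, 0)).2 + c) := by
  rw [← Fin.cast_val_eq_self c]
  induction (c : ℕ) with
  | zero => simp
  | succ k ih => simp only [Nat.cast_add_one, ← add_assoc, π.2 (i, k), ih]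

theorem fst_apply_zero_injective (π : ColoredPerm r n) :
    Function.Injective fun i => (π.1 (i, 0)).1 := by
  intro i j hij
  have : π.1 (j, (π.1 (i, 0)).2 - (π.1 (j, 0)).2) = π.1 (i, 0) := by
    rw [apply_mk, add_sub_cancel]
    exact Prod.ext hij.symm rfl
  exact (congrArg Prod.fst (π.1.injective this)).symm

/-- The wreath product decomposition `G_{r,n} ≃ S_n × (Z_r)^n`. -/
noncomputable def equivPermProd (r n : ℕ) [NeZero r] :
    Perm (Fin n) × (Fin n → Fin r) ≃ ColoredPerm r n where
  toFun p := ⟨p.1.prodShear fun i => Equiv.addLeft (p.2 i), fun x => by simp [add_assoc]⟩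
  invFun π :=
    (Equiv.ofBijective _ (Finite.injective_iff_bijective.mp π.fst_apply_zero_injective),
      fun i => (π.1 (i, 0)).2)
  left_inv p := by ext <;> simp
  right_inv π := by
    apply Subtype.ext
    ext x : 1
    simp [← apply_mk]

theorem equivPermProd_apply (p : Perm (Fin n) × (Fin n → Fin r)) (x : Fin n × Fin r) :
    (equivPermProd r n p).1 x = (p.1 x.1, p.2 x.1 + x.2) := rfl

noncomputable instance : Fintype (ColoredPerm r n) := Fintype.ofEquiv _ (equivPermProd r n)

theorem cExcA_equivPermProd (σ : Perm (Fin n)) (c : Fin n → Fin r) :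
    cExcA (equivPermProd r n (σ, c)) = #{i | i < σ i ∧ c i = 0} := by
  classical
  rw [cExcA, Nat.card_eq_fintype_card, Fintype.card_subtype]
  congr 1
  ext i
  simp only [mem_filter_univ, equivPermProd_apply, add_zero, colorLt, Fin.not_lt_zero, false_or]
  constructor
  · rintro ⟨-, hc, hi⟩
    exact ⟨hi, hc.symm⟩
  · rintro ⟨hi, hc⟩
    exact ⟨(Nat.succ_le_of_lt hi).trans_lt (σ i).isLt, hc.symm, hi⟩

theorem cExcA_le (π : ColoredPerm r n) : cExcA π ≤ n :=
  (Finite.card_subtype_le _).trans_eq (Nat.card_eq_fintype_card.trans (Fintype.card_fin n))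

end ColoredPerm

theorem sum_card_fiber_mul_X_pow {α : Type*} [Fintype α] (f : α → ℕ) {N : ℕ}
    (hf : ∀ a, f a ≤ N) :
    ∑ k ∈ range (N + 1), C (Nat.card {a // f a = k} : R) * X ^ k = ∑ a, X ^ f a := by
  classical
  rw [← sum_fiberwise_of_maps_to (t := range (N + 1)) (g := f)
    fun a _ => mem_range.mpr (Nat.lt_succ_of_le (hf a))]
  refine sum_congr rfl fun k _ => ?_
  rw [sum_congr rfl fun a ha => by rw [(mem_filter.mp ha).2], sum_const, nsmul_eq_mul,
    Nat.card_eq_fintype_card, Fintype.card_subtype, C_eq_natCast]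

theorem sum_pow_card_filter_and_eq {ι κ : Type*} [Fintype ι] [Fintype κ] [DecidableEq ι]
    [DecidableEq κ] (q : ι → Prop) [DecidablePred q] (k₀ : κ) (x : R) :
    ∑ c : ι → κ, x ^ #{i | q i ∧ c i = k₀} =
      (x + Fintype.card κ - 1) ^ #{i | q i} * (Fintype.card κ : R) ^ #{i | ¬q i} := by
  have hprod (c : ι → κ) :
      x ^ #{i | q i ∧ c i = k₀} = ∏ i, if q i ∧ c i = k₀ then x else 1 := by
    rw [← prod_filter, prod_const]
  have hfactor (i : ι) :
      ∑ v : κ, (if q i ∧ v = k₀ then x else 1) =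
        if q i then x + Fintype.card κ - 1 else (Fintype.card κ : R) := by
    by_cases hi : q i
    · have : 1 ≤ Fintype.card κ := Fintype.card_pos_iff.mpr ⟨k₀⟩
      simp [hi, sum_ite, filter_ne', filter_eq', Nat.cast_sub this]
      ring
    · simp [hi]
  simp_rw [hprod]
  rw [← Fintype.prod_sum fun i v => if q i ∧ v = k₀ then x else 1]
  simp_rw [hfactor]
  rw [prod_ite, prod_const, prod_const]

theorem Dpoly_eq_sum_perm (r n : ℕ) [NeZero r] :
    Dpoly r n =
      ∑ σ : Perm (Fin n),
        (X + (r : ℚ[X]) - 1) ^ excCount σ * (r : ℚ[X]) ^ (n - excCount σ) := by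
  rw [Dpoly]
  simp only [dG]
  rw [sum_card_fiber_mul_X_pow _ ColoredPerm.cExcA_le,
    ← (ColoredPerm.equivPermProd r n).sum_comp, Fintype.sum_prod_type]
  simp only [ColoredPerm.cExcA_equivPermProd, sum_pow_card_filter_and_eq, Fintype.card_fin,
    card_filter_not_lt_apply]
  rfl

/-- For all `n ≥ 1`,
`D_{r,n}(t) = r·Σ_{j=1}^{n} j!·S(n,j)·(t+r−1)^{j−1}·(1−t)^{n−j}`. -/
theorem Dpoly_closed_form (r n : ℕ) [NeZero r] (hn : 1 ≤ n) :
    Dpoly r n =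
      Polynomial.C (r : ℚ) *
        ∑ j ∈ Finset.Icc 1 n,
          Polynomial.C ((j.factorial * stirling2 n j : ℕ) : ℚ) *
            (Polynomial.X + Polynomial.C (r : ℚ) - 1) ^ (j - 1) *
            (1 - Polynomial.X) ^ (n - j) := by
  obtain ⟨m, rfl⟩ := Nat.exists_eq_add_of_le' hn
  have hr : (r : ℚ) ≠ 0 := Nat.cast_ne_zero.mpr (NeZero.ne r)
  refine Polynomial.funext fun t => ?_
  simp only [Dpoly_eq_sum_perm, stirling2_eq_stirlingSecond, eval_finsetSum, eval_mul, eval_pow,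
    eval_add, eval_sub, eval_X, eval_C, eval_one, eval_natCast]
  rw [sum_perm_pow_excCount_mul_pow m (t + r - 1) r hr,
    show (r : ℚ) - (t + r - 1) = 1 - t by ring]
end
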